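/- Let q(x,y,z) = x² + y² − z² with associated bilinear form B, and let A be a 3×3 real matrix preserving q with eigenvalues μ, ν, ε where |μ| > 1, |ν| < 1, ε = ±1. Then any eigenvector w of A corresponding to the eigenvalue ε satisfies q(w) > 0, i.e. every central vector lies in the exterior of the null cone of q. -/
import Mathlib


/-- The quadratic form `q(x,y,z) = x² + y² − z²`. -/
def qform (v : Fin 3 → ℝ) : ℝ := v 0 ^ 2 + v 1 ^ 2 - v 2 ^ 2

/-- The associated bilinear form. -/
def Bform (v w : Fin 3 → ℝ) : ℝ := v 0 * w 0 + v 1 * w 1 - v 2 * w 2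

lemma qform_eq_B (v : Fin 3 → ℝ) : qform v = Bform v v := by
  simp [qform, Bform]; ring

lemma qform_add (x y : Fin 3 → ℝ) :
    qform (x + y) = qform x + qform y + 2 * Bform x y := by
  simp [qform, Bform, Pi.add_apply]; ring

lemma Bform_smul (α β : ℝ) (u v : Fin 3 → ℝ) :
    Bform (α • u) (β • v) = α * β * Bform u v := by
  simp [Bform, Pi.smul_apply, smul_eq_mul]; ring

lemma Bform_comm (u v : Fin 3 → ℝ) : Bform u v = Bform v u := by
  simp [Bform]; ring

/-- Two null vectors that are B-orthogonal are parallel. -/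
lemma null_null_perp_dep (u v : Fin 3 → ℝ) (hu : u ≠ 0)
    (hqu : qform u = 0) (hqv : qform v = 0) (hB : Bform u v = 0) :
    ∃ t : ℝ, v = t • u := by
  have hc2 : u 2 ^ 2 = u 0 ^ 2 + u 1 ^ 2 := by
    unfold qform at hqu; linarith
  have hab : u 0 ^ 2 + u 1 ^ 2 ≠ 0 := by
    intro h
    apply hu
    have h0 : u 0 = 0 := by nlinarith [sq_nonneg (u 0), sq_nonneg (u 1)]
    have h1 : u 1 = 0 := by nlinarith [sq_nonneg (u 0), sq_nonneg (u 1)]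
    have h2 : u 2 = 0 := by nlinarith [sq_nonneg (u 2)]
    funext i; fin_cases i <;> simpa
  have hpos : 0 < u 0 ^ 2 + u 1 ^ 2 := lt_of_le_of_ne (by positivity) (Ne.symm hab)
  have hc : u 2 ≠ 0 := by
    intro h
    rw [h] at hc2
    simp at hc2
    exact hab hc2.symm
  have e1 : u 0 * v 0 + u 1 * v 1 = u 2 * v 2 := by
    unfold Bform at hB; linarith
  have e2 : v 2 ^ 2 = v 0 ^ 2 + v 1 ^ 2 := by
    unfold qform at hqv; linarith
  have hsq : (u 0 * v 1 - u 1 * v 0) ^ 2 = 0 := by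
    linear_combination (-(u 0 * v 0 + u 1 * v 1 + u 2 * v 2)) * e1 +
      (-(v 0 ^ 2 + v 1 ^ 2)) * hc2 + (-(u 2 ^ 2)) * e2
  have key : u 0 * v 1 = u 1 * v 0 := by
    have := pow_eq_zero_iff (n := 2) (by norm_num) |>.mp hsq
    linarith
  refine ⟨(u 0 * v 0 + u 1 * v 1) / (u 0 ^ 2 + u 1 ^ 2), ?_⟩
  funext i
  fin_cases i <;> simp [Pi.smul_apply, smul_eq_mul]
  · field_simp
    ring_nf
    nlinarith [key]
  · field_simp
    ring_nf
    nlinarith [key]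
  · field_simp
    have h2 : v 2 * u 2 ^ 2 = (u 0 * v 0 + u 1 * v 1) * u 2 := by
      rw [e1]; ring
    rw [← hc2]
    linarith [h2]

/-- The orthogonal complement of a timelike vector is positive definite. -/
lemma perp_timelike (w u : Fin 3 → ℝ) (hqw : qform w < 0)
    (hB : Bform w u = 0) (hu : u ≠ 0) : 0 < qform u := by
  unfold qform at hqw ⊢
  unfold Bform at hB
  have hz : w 2 ≠ 0 := by
    intro h; rw [h] at hqw; nlinarith [sq_nonneg (w 0), sq_nonneg (w 1)]
  by_contra hcon
  push_neg at hcon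
  by_cases hab : u 0 = 0 ∧ u 1 = 0
  · obtain ⟨h0, h1⟩ := hab
    have hc : u 2 = 0 := by
      have : w 2 * u 2 = 0 := by rw [h0, h1] at hB; linarith
      exact (mul_eq_zero.mp this).resolve_left hz
    exact hu (funext fun i => by fin_cases i <;> simpa)
  · have habpos : 0 < u 0 ^ 2 + u 1 ^ 2 := by
      rcases not_and_or.mp hab with h | h
      · have : 0 < u 0 ^ 2 := by positivity
        nlinarith [sq_nonneg (u 1)]
      · have : 0 < u 1 ^ 2 := by positivity
        nlinarith [sq_nonneg (u 0)]
    have hA1 : (w 0 * u 0 + w 1 * u 1) ^ 2 ≤ (w 0 ^ 2 + w 1 ^ 2) * (u 0 ^ 2 + u 1 ^ 2) := by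
      nlinarith [sq_nonneg (w 0 * u 1 - w 1 * u 0)]
    have hA2 : (w 0 ^ 2 + w 1 ^ 2) * (u 0 ^ 2 + u 1 ^ 2) < (w 2 ^ 2) * (u 0 ^ 2 + u 1 ^ 2) :=
      mul_lt_mul_of_pos_right (by linarith) habpos
    have hA3 : (w 2 ^ 2) * (u 0 ^ 2 + u 1 ^ 2) ≤ (w 2 ^ 2) * (u 2 ^ 2) :=
      mul_le_mul_of_nonneg_left (by linarith) (sq_nonneg _)
    have hA4 : (w 0 * u 0 + w 1 * u 1) ^ 2 = (w 2 ^ 2) * (u 2 ^ 2) := by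
      linear_combination (w 0 * u 0 + w 1 * u 1 + w 2 * u 2) * hB
    linarith

theorem central_vector_exterior_null_cone
    (A : Matrix (Fin 3) (Fin 3) ℝ)
    (hA : ∀ v, qform (A.mulVec v) = qform v)
    (vμ : Fin 3 → ℝ) (hvμ : vμ ≠ 0) (μ : ℝ) (hμ : 1 < |μ|) (heigμ : A.mulVec vμ = μ • vμ)
    (vν : Fin 3 → ℝ) (hvν : vν ≠ 0) (ν : ℝ) (hν : |ν| < 1) (heigν : A.mulVec vν = ν • vν)
    (w : Fin 3 → ℝ) (hw : w ≠ 0) (ε : ℝ) (hε : ε = 1 ∨ ε = -1) (heigw : A.mulVec w = ε • w) :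
    0 < qform w := by
  -- A preserves the bilinear form
  have hB2 : ∀ v u, Bform (A.mulVec v) (A.mulVec u) = Bform v u := by
    intro v u
    have h1 := hA (v + u)
    rw [Matrix.mulVec_add, qform_add, qform_add, hA v, hA u] at h1
    linarith
  -- |ε| = 1
  have hεabs : |ε| = 1 := by rcases hε with h | h <;> simp [h]
  have hμ2 : 1 < μ ^ 2 := by nlinarith [sq_abs μ, abs_nonneg μ]
  -- q vμ = 0
  have hqμ : qform vμ = 0 := by
    have h := hB2 vμ vμ
    rw [heigμ, Bform_smul] at h
    have h2 : (μ * μ - 1) * Bform vμ vμ = 0 := by linear_combination h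
    have h3 : μ * μ - 1 ≠ 0 := by nlinarith
    rw [qform_eq_B]
    exact (mul_eq_zero.mp h2).resolve_left h3
  -- B vμ w = 0
  have hBμw : Bform vμ w = 0 := by
    have h := hB2 vμ w
    rw [heigμ, heigw, Bform_smul] at h
    have h2 : (μ * ε - 1) * Bform vμ w = 0 := by linear_combination h
    have h3 : μ * ε - 1 ≠ 0 := by
      intro hc
      have h1 : μ * ε = 1 := by linarith
      have h4 : |μ| * |ε| = 1 := by rw [← abs_mul, h1, abs_one]
      rw [hεabs, mul_one] at h4
      linarith
    exact (mul_eq_zero.mp h2).resolve_left h3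
  by_contra hcon
  push_neg at hcon
  rcases hcon.lt_or_eq with hlt | heq0
  · -- w timelike ⇒ vμ spacelike, contradicting q vμ = 0
    have := perp_timelike w vμ hlt (by rw [Bform_comm]; exact hBμw) hvμ
    linarith
  · -- w null ⇒ w parallel to vμ ⇒ μ = ε, contradiction
    obtain ⟨t, hwt⟩ := null_null_perp_dep vμ w hvμ hqμ heq0 hBμw
    have ht : t ≠ 0 := by
      intro h; apply hw; rw [hwt, h, zero_smul]
    have hAw : A.mulVec w = (t * μ) • vμ := by
      rw [hwt, Matrix.mulVec_smul, heigμ, smul_smul]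
    have hAw2 : A.mulVec w = (ε * t) • vμ := by
      rw [heigw, hwt, smul_smul]
    obtain ⟨i, hi⟩ := Function.ne_iff.mp hvμ
    have hi' : vμ i ≠ 0 := by simpa using hi
    have : t * μ = ε * t := by
      have := hAw.symm.trans hAw2
      have h := congrFun this i
      simp only [Pi.smul_apply, smul_eq_mul] at h
      exact mul_right_cancel₀ hi' h
    have hμε : μ = ε := by
      have := mul_left_cancel₀ ht (by linarith [this] : t * μ = t * ε)
      exact this
    rw [hμε, hεabs] at hμ
    exact lt_irrefl 1 hμ
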